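/- Let (V; f, g) be a dual-modular instance and θ : ℝ≥0 → ℝ convex. If (p, q) is a minimizer of Φ_θ(p, q) = D_θ(f^p ‖ g^q) over all pairs of probability distributions on permutations of V, then there exists a locally maximin solution (p̂, q̂) that is also a minimizer; if moreover θ is strictly convex, then (p̂, q̂) can be chosen so that (f^{p̂}, g^{q̂}) = (f^p, g^q), hence the induced densities are preserved. The same conclusions hold for the minimization restricted to the diagonal p = q. -/

import Mathlib

open Finset

variable {V : Type*} [Fintype V] [DecidableEq V]

/-- A set function is supermodular. -/
def Supermodular (f : Finset V → ℝ) : Prop :=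
  ∀ A B : Finset V, f A + f B ≤ f (A ∩ B) + f (A ∪ B)

/-- A set function is submodular. -/
def Submodular (g : Finset V → ℝ) : Prop :=
  ∀ A B : Finset V, g (A ∩ B) + g (A ∪ B) ≤ g A + g B

/-- A set function is monotone. -/
def MonotoneFn (f : Finset V → ℝ) : Prop :=
  ∀ A B : Finset V, A ⊆ B → f A ≤ f B

/-- A set function is strictly monotone. -/
def StrictMonoFn (g : Finset V → ℝ) : Prop :=
  ∀ A B : Finset V, A ⊂ B → g A < g B

/-- A dual-modular instance `(V; f, g)`: `f` is a nonnegative monotone supermodular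
reward function, `g` is a nonnegative strictly monotone submodular cost function,
both vanishing on the empty set. -/
structure DualModular (f g : Finset V → ℝ) : Prop where
  f_nonneg : ∀ A, 0 ≤ f A
  g_nonneg : ∀ A, 0 ≤ g A
  f_empty : f ∅ = 0
  g_empty : g ∅ = 0
  f_mono : MonotoneFn f
  g_strictMono : StrictMonoFn g
  f_supermodular : Supermodular f
  g_submodular : Submodular g

/-- Density of a subset. -/
noncomputable def density (f g : Finset V → ℝ) (S : Finset V) : ℝ := f S / g S

/-- Marginal contribution `h(S|A) = h(S ∪ A) - h(A)`. -/
def marginal (h : Finset V → ℝ) (S A : Finset V) : ℝ := h (S ∪ A) - h A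

/-- Marginal density `ρ(S|A) = f(S|A)/g(S|A)`. -/
noncomputable def margDensity (f g : Finset V → ℝ) (S A : Finset V) : ℝ :=
  marginal f S A / marginal g S A

/-- `S_{<i}`: the union of earlier parts in an indexed family. -/
def below {k : ℕ} (S : Fin k → Finset V) (i : Fin k) : Finset V :=
  (Finset.univ.filter (fun j => j < i)).biUnion S

/-- The density decomposition `V = S₁ ∪ … ∪ S_k`: each `S i` is a nonempty maximal
densest subset of the remaining instance with marginal functions. -/
structure IsDensityDecomposition (f g : Finset V → ℝ) {k : ℕ} (S : Fin k → Finset V) :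
    Prop where
  nonempty : ∀ i, (S i).Nonempty
  disj : ∀ i, Disjoint (S i) (below S i)
  cover : Finset.univ.biUnion S = (Finset.univ : Finset V)
  maxDensity : ∀ i, ∀ T : Finset V, T.Nonempty → Disjoint T (below S i) →
    margDensity f g T (below S i) ≤ margDensity f g (S i) (below S i)
  maximal : ∀ i, ∀ T : Finset V, T.Nonempty → Disjoint T (below S i) →
    margDensity f g (S i) (below S i) ≤ margDensity f g T (below S i) → T ⊆ S i

/-- `ρ_i`, the density of the `i`-th component of the decomposition. -/
noncomputable def decompDensity (f g : Finset V → ℝ) {k : ℕ} (S : Fin k → Finset V)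
    (i : Fin k) : ℝ :=
  margDensity f g (S i) (below S i)

/-- Membership in the base contrapolymatroid `B≥_f`. -/
def memBf (f : Finset V → ℝ) (x : V → ℝ) : Prop :=
  (∀ v, 0 ≤ x v) ∧ (∑ v, x v = f Finset.univ) ∧ ∀ A : Finset V, f A ≤ ∑ v ∈ A, x v

/-- Membership in the base polymatroid `B≤_g`. -/
def memBg (g : Finset V → ℝ) (y : V → ℝ) : Prop :=
  (∀ v, 0 ≤ y v) ∧ (∑ v, y v = g Finset.univ) ∧ ∀ A : Finset V, ∑ v ∈ A, y v ≤ g A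

/-- An allocation is a pair `(x, y) ∈ B≥_f × B≤_g`. -/
def Allocation (f g : Finset V → ℝ) (x y : V → ℝ) : Prop := memBf f x ∧ memBg g y

/-- The locally maximin condition for an allocation. -/
def LocallyMaximin (f g : Finset V → ℝ) (x y : V → ℝ) : Prop :=
  ∀ ρ : ℝ, 0 < ρ →
    (∑ v ∈ Finset.univ.filter (fun v => ρ ≤ x v / y v), x v
       = f (Finset.univ.filter (fun v => ρ ≤ x v / y v))) ∧
    (∑ v ∈ Finset.univ.filter (fun v => ρ ≤ x v / y v), y v
       = g (Finset.univ.filter (fun v => ρ ≤ x v / y v)))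

/-- The multiset of induced densities, sorted in non-increasing order. -/
noncomputable def sortedDensities (x y : V → ℝ) : List ℝ :=
  ((Finset.univ.val.map (fun v => x v / y v)).sort (· ≤ ·)).reverse

/-- An allocation is lexicographically optimal if its non-increasingly sorted density
vector is lexicographically minimal among all allocations. -/
def LexOptimal (f g : Finset V → ℝ) (x y : V → ℝ) : Prop :=
  Allocation f g x y ∧
  ∀ x' y' : V → ℝ, Allocation f g x' y' → sortedDensities x y ≤ sortedDensities x' y'

/-- The hockey-stick divergence `HS_γ(x ‖ y)`. -/
noncomputable def HS (γ : ℝ) (x y : V → ℝ) : ℝ := ∑ u, max (x u - γ * y u) 0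

/-- The `θ`-divergence `D_θ(x ‖ y) = Σ_u y_u · θ(x_u / y_u)`. -/
noncomputable def Dtheta (θ : ℝ → ℝ) (x y : V → ℝ) : ℝ := ∑ u, y u * θ (x u / y u)

/-- Permutations of `V`, encoded as bijections to positions `Fin |V|`;
`u ≺_σ v` iff `σ u < σ v`. -/
abbrev Perms (V : Type*) [Fintype V] := V ≃ Fin (Fintype.card V)

/-- `h^σ(u)`: the marginal contribution of `u` given the elements preceding it in `σ`. -/
def permVal (h : Finset V → ℝ) (σ : Perms V) (u : V) : ℝ :=
  h (insert u (Finset.univ.filter (fun w => σ w < σ u))) -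
    h (Finset.univ.filter (fun w => σ w < σ u))

/-- A probability distribution on permutations of `V`. -/
def IsDist (p : Perms V → ℝ) : Prop := (∀ σ, 0 ≤ p σ) ∧ ∑ σ, p σ = 1

/-- `h^p(u) = Σ_σ p_σ · h^σ(u)`. -/
noncomputable def distVal (h : Finset V → ℝ) (p : Perms V → ℝ) (u : V) : ℝ :=
  ∑ σ, p σ * permVal h σ u

/-- The density induced by a solution `(p, q)`. -/
noncomputable def solDensity (f g : Finset V → ℝ) (p q : Perms V → ℝ) (v : V) : ℝ :=
  distVal f p v / distVal g q v

/-- A solution `(p, q)` is locally maximin if whenever `u` has strictly larger induced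
density than `v`, every permutation with positive weight puts `u` before `v`. -/
def LocallyMaximinSol (f g : Finset V → ℝ) (p q : Perms V → ℝ) : Prop :=
  ∀ u v : V, solDensity f g p q v < solDensity f g p q u →
    ∀ σ : Perms V, (0 < p σ ∨ 0 < q σ) → σ u < σ v

/-- The convex-program objective `Φ_θ(p, q) = D_θ(f^p ‖ g^q)`. -/
noncomputable def Phi (θ : ℝ → ℝ) (f g : Finset V → ℝ) (p q : Perms V → ℝ) : ℝ :=
  Dtheta θ (distVal f p) (distVal g q)

/-!
Exchanging two adjacent elements `w₁ w₂` of a permutation (`w₁` first) raises the `f`-marginal of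
`w₁` and lowers that of `w₂` by the same amount (supermodularity), and does the opposite for `g`
(submodularity). If `w₁` has the lower density, transferring a little mass to the exchanged
permutation moves the two densities towards each other, which by convexity does not increase
`Φ_θ`, and strictly decreases it when `θ` is strictly convex and the allocation moves. So at a
minimizer for a strictly convex `θ` such exchanges inside the support leave all marginals
unchanged, and performing them one at a time sorts the support by density without changing the
allocation.

For a merely convex `θ`, replace `θ 0` by the right limit `θ (0+)`, which makes `Φ` continuous,
and break ties by minimizing `Φ` for `t ↦ t²` among the minimizers. At a locally maximin solution
the elements of density `0` carry the least possible `g`-mass, so lowering `θ 0` costs nothing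
there.
-/
open Filter Topology

set_option linter.unusedSectionVars false

lemma Supermodular.marginal_mono {f : Finset V → ℝ} (hf : Supermodular f) {A B : Finset V}
    (hAB : A ⊆ B) {u : V} (hu : u ∉ B) :
    f (insert u A) - f A ≤ f (insert u B) - f B := by
  have hinter : insert u A ∩ B = A := by
    ext w
    simp only [mem_inter, mem_insert]
    constructor
    · rintro ⟨rfl | hw, hwB⟩
      · exact absurd hwB hu
      · exact hw
    · exact fun hw => ⟨Or.inr hw, hAB hw⟩
  have hunion : insert u A ∪ B = insert u B := by
    rw [insert_union, union_eq_right.2 hAB]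
  have := hf (insert u A) B
  rw [hinter, hunion] at this
  linarith

lemma Submodular.neg {g : Finset V → ℝ} (hg : Submodular g) : Supermodular fun A => -g A :=
  fun A B => by linarith [hg A B]

def predecessors (σ : Perms V) (u : V) : Finset V := univ.filter fun w => σ w < σ u

lemma permVal_eq (h : Finset V → ℝ) (σ : Perms V) (u : V) :
    permVal h σ u = h (insert u (predecessors σ u)) - h (predecessors σ u) := rfl

lemma notMem_predecessors (σ : Perms V) (u : V) : u ∉ predecessors σ u := by
  simp [predecessors]

lemma permVal_neg (h : Finset V → ℝ) (σ : Perms V) (u : V) :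
    permVal (fun A => -h A) σ u = -permVal h σ u := by
  simp only [permVal_eq]; ring

lemma permVal_nonneg {f : Finset V → ℝ} (hf : MonotoneFn f) (σ : Perms V) (u : V) :
    0 ≤ permVal f σ u :=
  sub_nonneg.2 (hf _ _ (subset_insert _ _))

lemma permVal_pos {g : Finset V → ℝ} (hg : StrictMonoFn g) (σ : Perms V) (u : V) :
    0 < permVal g σ u :=
  sub_pos.2 (hg _ _ (ssubset_insert (notMem_predecessors σ u)))

lemma Supermodular.permVal_le {f : Finset V → ℝ} (hf : Supermodular f) (σ : Perms V) (u : V) :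
    permVal f σ u ≤ f univ - f (univ.erase u) := by
  have := hf.marginal_mono (subset_erase.2 ⟨subset_univ _, notMem_predecessors σ u⟩)
    (notMem_erase u univ)
  rwa [insert_erase (mem_univ u)] at this

def IsInitial (σ : Perms V) (A : Finset V) : Prop := ∀ w ∈ A, ∀ v ∉ A, σ w < σ v

lemma isInitial_univ (σ : Perms V) : IsInitial σ univ := fun _ _ v hv => absurd (mem_univ v) hv

lemma subset_predecessors_of_le {σ : Perms V} {A : Finset V} {a : V} (ha : a ∉ A)
    (hmax : ∀ w ∈ A, σ w ≤ σ a) : A ⊆ predecessors σ a := fun w hw =>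
  mem_filter.2 ⟨mem_univ w, (hmax w hw).lt_of_ne fun h => ha (σ.injective h ▸ hw)⟩

lemma sum_permVal_of_isInitial {h : Finset V → ℝ} (h0 : h ∅ = 0) (σ : Perms V) (A : Finset V)
    (hA : IsInitial σ A) : ∑ w ∈ A, permVal h σ w = h A := by
  induction A using Finset.induction_on_max_value σ with
  | empty => simp [h0]
  | insert a A ha hmax ih =>
    have hpred : predecessors σ a = A := by
      refine (subset_predecessors_of_le ha hmax).antisymm' fun w hw => ?_
      by_contra hwA
      have hwa : w ≠ a := fun h => (notMem_predecessors σ a) (h ▸ hw)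
      exact (mem_filter.1 hw).2.not_gt (hA a (mem_insert_self a A) w (by simp [hwa, hwA]))
    have hAinit : IsInitial σ A := fun w hw v hv => by
      by_cases hva : v = a
      · exact hva ▸ (hmax w hw).lt_of_ne fun h => ha (σ.injective h ▸ hw)
      · exact hA w (mem_insert_of_mem hw) v (by simp [hva, hv])
    rw [sum_insert ha, ih hAinit, permVal_eq, hpred]
    ring

lemma Submodular.sum_permVal_le {g : Finset V → ℝ} (hg : Submodular g) (h0 : g ∅ = 0)
    (σ : Perms V) (A : Finset V) : ∑ w ∈ A, permVal g σ w ≤ g A := by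
  induction A using Finset.induction_on_max_value σ with
  | empty => simp [h0]
  | insert a A ha hmax ih =>
    have := hg.neg.marginal_mono (subset_predecessors_of_le ha hmax) (notMem_predecessors σ a)
    rw [sum_insert ha, permVal_eq]
    linarith

lemma IsDist.exists_pos {p : Perms V → ℝ} (hp : IsDist p) : ∃ σ, 0 < p σ := by
  by_contra! h
  have := sum_nonpos fun σ (_ : σ ∈ univ) => h σ
  linarith [hp.2]

lemma distVal_nonneg {f : Finset V → ℝ} (hf : MonotoneFn f) {p : Perms V → ℝ}
    (hp : IsDist p) (u : V) : 0 ≤ distVal f p u :=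
  sum_nonneg fun σ _ => mul_nonneg (hp.1 σ) (permVal_nonneg hf σ u)

lemma distVal_pos {g : Finset V → ℝ} (hg : StrictMonoFn g) {q : Perms V → ℝ}
    (hq : IsDist q) (u : V) : 0 < distVal g q u := by
  obtain ⟨σ, hσ⟩ := hq.exists_pos
  exact lt_of_lt_of_le (mul_pos hσ (permVal_pos hg σ u))
    (single_le_sum (fun τ _ => mul_nonneg (hq.1 τ) (permVal_pos hg τ u).le) (mem_univ σ))

lemma sum_distVal (h : Finset V → ℝ) (p : Perms V → ℝ) (A : Finset V) :
    ∑ u ∈ A, distVal h p u = ∑ σ, p σ * ∑ u ∈ A, permVal h σ u := by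
  simp only [distVal, mul_sum]
  exact sum_comm

lemma sum_distVal_of_isInitial {h : Finset V → ℝ} (h0 : h ∅ = 0) {p : Perms V → ℝ}
    (hp : IsDist p) {A : Finset V} (hA : ∀ σ, 0 < p σ → IsInitial σ A) :
    ∑ u ∈ A, distVal h p u = h A := by
  rw [sum_distVal]
  calc ∑ σ, p σ * ∑ u ∈ A, permVal h σ u = ∑ σ, p σ * h A := by
        refine sum_congr rfl fun σ _ => ?_
        rcases (hp.1 σ).lt_or_eq with hσ | hσ
        · rw [sum_permVal_of_isInitial h0 σ A (hA σ hσ)]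
        · simp [← hσ]
    _ = h A := by rw [← sum_mul, hp.2, one_mul]

lemma Submodular.sum_distVal_le {g : Finset V → ℝ} (hg : Submodular g) (h0 : g ∅ = 0)
    {q : Perms V → ℝ} (hq : IsDist q) (A : Finset V) : ∑ u ∈ A, distVal g q u ≤ g A := by
  rw [sum_distVal]
  calc ∑ σ, q σ * ∑ u ∈ A, permVal g σ u ≤ ∑ σ, q σ * g A :=
        sum_le_sum fun σ _ => mul_le_mul_of_nonneg_left (hg.sum_permVal_le h0 σ A) (hq.1 σ)
    _ = g A := by rw [← sum_mul, hq.2, one_mul]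

def Adjacent (σ : Perms V) (u v : V) : Prop := (σ v : ℕ) = σ u + 1

def swapPerm (σ : Perms V) (u v : V) : Perms V := (Equiv.swap u v).trans σ

def swapGain (h : Finset V → ℝ) (σ : Perms V) (w₁ w₂ : V) : ℝ :=
  permVal h σ w₂ - permVal h (swapPerm σ w₁ w₂) w₂

section Adjacent

variable {σ : Perms V} {w₁ w₂ : V}

lemma Adjacent.ne (hadj : Adjacent σ w₁ w₂) : w₁ ≠ w₂ := by
  rintro rfl; unfold Adjacent at hadj; omega

lemma Adjacent.lt (hadj : Adjacent σ w₁ w₂) : σ w₁ < σ w₂ := by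
  rw [Fin.lt_def, hadj]; omega

lemma Adjacent.swapPerm_ne (hadj : Adjacent σ w₁ w₂) : swapPerm σ w₁ w₂ ≠ σ := fun h => by
  have := congrArg (fun τ : Perms V => (τ w₁ : ℕ)) h
  simp only [swapPerm, Equiv.trans_apply, Equiv.swap_apply_left] at this
  unfold Adjacent at hadj; omega

lemma Adjacent.swapPerm_lt_swapPerm_iff (hadj : Adjacent σ w₁ w₂) {u v : V}
    (h₁ : ¬(u = w₁ ∧ v = w₂)) (h₂ : ¬(u = w₂ ∧ v = w₁)) :
    swapPerm σ w₁ w₂ u < swapPerm σ w₁ w₂ v ↔ σ u < σ v := by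
  have hpos : ∀ x, swapPerm σ w₁ w₂ x = Equiv.swap (σ w₁) (σ w₂) (σ x) := fun x =>
    (σ.injective.swap_apply w₁ w₂ x).symm
  simp only [← σ.injective.eq_iff (a := u), ← σ.injective.eq_iff (a := v)] at h₁ h₂
  unfold Adjacent at hadj
  rw [hpos, hpos]
  generalize σ u = i, σ v = j, σ w₁ = k, σ w₂ = k' at *
  simp only [Equiv.swap_apply_def, Fin.lt_def, Fin.ext_iff] at *
  split_ifs <;> omega

lemma Adjacent.predecessors_swapPerm_of_ne (hadj : Adjacent σ w₁ w₂) {u : V} (h₁ : u ≠ w₁)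
    (h₂ : u ≠ w₂) : predecessors (swapPerm σ w₁ w₂) u = predecessors σ u := by
  ext w
  simp only [predecessors, mem_filter, mem_univ, true_and]
  exact hadj.swapPerm_lt_swapPerm_iff (by tauto) (by tauto)

lemma Adjacent.predecessors_swapPerm_right (hadj : Adjacent σ w₁ w₂) :
    predecessors (swapPerm σ w₁ w₂) w₂ = predecessors σ w₁ := by
  unfold Adjacent at hadj
  ext w
  simp only [predecessors, mem_filter, mem_univ, true_and, swapPerm, Equiv.trans_apply,
    Equiv.swap_apply_right, Fin.lt_def]
  rcases eq_or_ne w w₁ with rfl | h₁ <;> rcases eq_or_ne w w₂ with rfl | h₂ <;>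
    simp_all [Equiv.swap_apply_of_ne_of_ne]

lemma Adjacent.predecessors_right (hadj : Adjacent σ w₁ w₂) :
    predecessors σ w₂ = insert w₁ (predecessors σ w₁) := by
  unfold Adjacent at hadj
  ext w
  simp only [predecessors, mem_filter, mem_univ, true_and, mem_insert, Fin.lt_def]
  rcases eq_or_ne w w₁ with rfl | h₁
  · simp [hadj]
  · have : (σ w : ℕ) ≠ σ w₁ := fun h => h₁ (σ.injective (Fin.ext h))
    simp only [h₁, false_or]; omega

lemma Adjacent.permVal_swapPerm_of_ne (hadj : Adjacent σ w₁ w₂) (h : Finset V → ℝ) {u : V}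
    (h₁ : u ≠ w₁) (h₂ : u ≠ w₂) : permVal h (swapPerm σ w₁ w₂) u = permVal h σ u := by
  rw [permVal_eq, permVal_eq, hadj.predecessors_swapPerm_of_ne h₁ h₂]

/-- The pair `{w₁, w₂}` contributes the same total marginal in either order. -/
lemma Adjacent.permVal_swapPerm_left (hadj : Adjacent σ w₁ w₂) (h : Finset V → ℝ) :
    permVal h (swapPerm σ w₁ w₂) w₁ = permVal h σ w₁ + swapGain h σ w₁ w₂ := by
  have hpred : predecessors (swapPerm σ w₁ w₂) w₁ = insert w₂ (predecessors σ w₁) := by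
    have := hadj.predecessors_swapPerm_right
    have hadj' : Adjacent (swapPerm σ w₁ w₂) w₂ w₁ := by
      simp only [Adjacent, swapPerm, Equiv.trans_apply, Equiv.swap_apply_left,
        Equiv.swap_apply_right] at hadj ⊢; exact hadj
    rw [hadj'.predecessors_right, this]
  rw [swapGain, permVal_eq, permVal_eq, permVal_eq, permVal_eq, hpred,
    hadj.predecessors_swapPerm_right, hadj.predecessors_right, insert_comm]
  ring

lemma Adjacent.swapGain_nonneg (hadj : Adjacent σ w₁ w₂) {f : Finset V → ℝ}
    (hf : Supermodular f) : 0 ≤ swapGain f σ w₁ w₂ := by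
  have hw₂ : w₂ ∉ insert w₁ (predecessors σ w₁) := by
    rw [← hadj.predecessors_right]; exact notMem_predecessors σ w₂
  rw [swapGain, sub_nonneg, permVal_eq, permVal_eq, hadj.predecessors_swapPerm_right,
    hadj.predecessors_right]
  exact hf.marginal_mono (subset_insert _ _) hw₂

lemma Adjacent.swapGain_nonpos (hadj : Adjacent σ w₁ w₂) {g : Finset V → ℝ}
    (hg : Submodular g) : swapGain g σ w₁ w₂ ≤ 0 := by
  have := hadj.swapGain_nonneg hg.neg
  simp only [swapGain, permVal_neg] at this ⊢
  linarith

end Adjacent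

noncomputable def inversions (ρ : V → ℝ) (σ : Perms V) : Finset (V × V) :=
  univ.filter fun uv => σ uv.1 < σ uv.2 ∧ ρ uv.1 < ρ uv.2

lemma Adjacent.inversions_swapPerm {ρ : V → ℝ} {σ : Perms V} {w₁ w₂ : V}
    (hadj : Adjacent σ w₁ w₂) (hρ : ρ w₁ < ρ w₂) :
    inversions ρ (swapPerm σ w₁ w₂) = (inversions ρ σ).erase (w₁, w₂) := by
  ext ⟨u, v⟩
  simp only [inversions, mem_erase, mem_filter, mem_univ, true_and, ne_eq, Prod.mk.injEq]
  by_cases h₁ : u = w₁ ∧ v = w₂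
  · obtain ⟨rfl, rfl⟩ := h₁
    unfold Adjacent at hadj
    simp [swapPerm, Fin.lt_def, hadj]
  · by_cases h₂ : u = w₂ ∧ v = w₁
    · obtain ⟨rfl, rfl⟩ := h₂
      simp [hρ.not_gt]
    · rw [hadj.swapPerm_lt_swapPerm_iff h₁ h₂]; tauto

lemma exists_adjacent_of_inversions_nonempty {ρ : V → ℝ} {σ : Perms V}
    (hne : (inversions ρ σ).Nonempty) : ∃ w₁ w₂, Adjacent σ w₁ w₂ ∧ ρ w₁ < ρ w₂ := by
  obtain ⟨⟨u, v⟩, huv, hmin⟩ := exists_min_image _ (fun uv => (σ uv.2 : ℕ) - σ uv.1) hne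
  simp only [inversions, mem_filter, mem_univ, true_and, Fin.lt_def, Prod.forall] at huv hmin
  obtain ⟨hσuv, hρuv⟩ := huv
  have := (σ v).isLt
  by_cases hadj : (σ v : ℕ) = σ u + 1
  · exact ⟨u, v, hadj, hρuv⟩
  -- otherwise the successor `w` of `u` splits the inversion `(u, v)` into a shorter one
  set w := σ.symm ⟨σ u + 1, by omega⟩
  have hw : (σ w : ℕ) = σ u + 1 := by simp [w]
  rcases lt_or_ge (ρ u) (ρ w) with h | h
  · have := hmin u w ⟨by omega, h⟩; omega
  · have := hmin w v ⟨by omega, by linarith⟩; omega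

noncomputable def transfer (p : Perms V → ℝ) (σ σ' : Perms V) (t : ℝ) : Perms V → ℝ :=
  p + Pi.single σ' t - Pi.single σ t

lemma IsDist.transfer {p : Perms V → ℝ} (hp : IsDist p) {σ σ' : Perms V} (hne : σ ≠ σ') {t : ℝ}
    (ht₀ : 0 ≤ t) (ht : t ≤ p σ) : IsDist (transfer p σ σ' t) := by
  refine ⟨fun τ => ?_, ?_⟩
  · simp only [_root_.transfer, Pi.add_apply, Pi.sub_apply, Pi.single_apply]
    have := hp.1 τ
    split_ifs with h₁ h₂ <;> subst_vars <;> first | exact absurd rfl hne | linarith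
  · simp [_root_.transfer, sum_add_distrib, sum_sub_distrib, hp.2]

lemma distVal_transfer (h : Finset V → ℝ) (p : Perms V → ℝ) (σ σ' : Perms V) (t : ℝ) (u : V) :
    distVal h (transfer p σ σ' t) u = distVal h p u + t * (permVal h σ' u - permVal h σ u) := by
  simp only [distVal, transfer, Pi.add_apply, Pi.sub_apply, add_mul, sub_mul, sum_add_distrib,
    sum_sub_distrib, Pi.single_apply, ite_mul, zero_mul, sum_ite_eq', mem_univ, if_true]
  ring

lemma Adjacent.distVal_transfer_swapPerm {σ : Perms V} {w₁ w₂ : V} (hadj : Adjacent σ w₁ w₂)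
    (h : Finset V → ℝ) (p : Perms V → ℝ) (t : ℝ) :
    distVal h (transfer p σ (swapPerm σ w₁ w₂) t)
      = distVal h p + (t * swapGain h σ w₁ w₂) • (Pi.single w₁ 1 - Pi.single w₂ 1) := by
  funext u
  rw [distVal_transfer]
  simp only [Pi.add_apply, Pi.smul_apply, Pi.sub_apply, Pi.single_apply, smul_eq_mul]
  rcases eq_or_ne u w₁ with rfl | h₁
  · simp [hadj.ne, hadj.permVal_swapPerm_left]
  rcases eq_or_ne u w₂ with rfl | h₂
  · simp [h₁, swapGain]; ring
  · simp [h₁, h₂, hadj.permVal_swapPerm_of_ne h h₁ h₂]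

noncomputable def solSupport (p q : Perms V → ℝ) : Finset (Perms V) :=
  univ.filter fun σ => 0 < p σ ∨ 0 < q σ

noncomputable def inversionCount (ρ : V → ℝ) (p q : Perms V → ℝ) : ℕ :=
  ∑ σ ∈ solSupport p q, #(inversions ρ σ)

lemma locallyMaximinSol_of_inversions_eq_empty {f g : Finset V → ℝ} {p q : Perms V → ℝ}
    (h : ∀ σ ∈ solSupport p q, inversions (solDensity f g p q) σ = ∅) :
    LocallyMaximinSol f g p q := by
  intro u v huv σ hσ
  by_contra hle
  have hne : v ≠ u := by rintro rfl; exact lt_irrefl _ huv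
  have hvu : σ v < σ u := (not_lt.1 hle).lt_of_ne (σ.injective.ne hne)
  have hmem : (v, u) ∈ inversions (solDensity f g p q) σ := mem_filter.2 ⟨mem_univ _, hvu, huv⟩
  rw [h σ (mem_filter.2 ⟨mem_univ _, hσ⟩)] at hmem
  exact notMem_empty _ hmem

lemma solSupport_transfer_subset {p q : Perms V → ℝ} {σ σ' : Perms V} (hne : σ ≠ σ') :
    solSupport (transfer p σ σ' (p σ)) (transfer q σ σ' (q σ))
      ⊆ (solSupport p q).erase σ ∪ {σ'} := by
  intro τ hτ
  simp only [solSupport, transfer, mem_filter, mem_univ, true_and, Pi.add_apply, Pi.sub_apply,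
    Pi.single_apply] at hτ
  simp only [solSupport, mem_union, mem_erase, mem_filter, mem_univ, true_and, mem_singleton]
  by_cases h' : τ = σ'
  · exact Or.inr h'
  by_cases h : τ = σ
  · subst h; simp [h'] at hτ
  · simp only [h, h', if_false, add_zero, sub_zero] at hτ
    exact Or.inl ⟨h, hτ⟩

lemma ConvexOn.chord_le {s : Set ℝ} {θ : ℝ → ℝ} (hθ : ConvexOn ℝ s θ) {a b c : ℝ} (ha : a ∈ s)
    (hb : b ∈ s) (hac : a ≤ c) (hcb : c ≤ b) :
    (b - a) * θ c ≤ (b - c) * θ a + (c - a) * θ b := by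
  rcases hac.eq_or_lt with rfl | hac
  · linarith
  rcases hcb.eq_or_lt with rfl | hcb
  · linarith
  exact hθ.secant_mono_aux1 ha hb hac hcb

/-- Two masses with the same total and first moment as `(y₁, a), (y₂, b)` integrate every affine
function to the same value. -/
lemma two_point_chord_eq {θa θb a b y₁ y₂ v₁ v₂ c₁ c₂ : ℝ} (hmass : v₁ + v₂ = y₁ + y₂)
    (hmom : v₁ * c₁ + v₂ * c₂ = y₁ * a + y₂ * b) :
    v₁ * ((b - c₁) * θa + (c₁ - a) * θb) + v₂ * ((b - c₂) * θa + (c₂ - a) * θb)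
      = (b - a) * (y₁ * θa + y₂ * θb) := by
  linear_combination (b * θa - a * θb) * hmass + (θb - θa) * hmom

lemma ConvexOn.two_point_le {θ : ℝ → ℝ} (hθ : ConvexOn ℝ (Set.Ici 0) θ)
    {a b y₁ y₂ v₁ v₂ c₁ c₂ : ℝ} (ha : 0 ≤ a) (hab : a < b) (hv₁ : 0 ≤ v₁) (hv₂ : 0 ≤ v₂)
    (hc₁ : c₁ ∈ Set.Icc a b) (hc₂ : c₂ ∈ Set.Icc a b) (hmass : v₁ + v₂ = y₁ + y₂)
    (hmom : v₁ * c₁ + v₂ * c₂ = y₁ * a + y₂ * b) :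
    v₁ * θ c₁ + v₂ * θ c₂ ≤ y₁ * θ a + y₂ * θ b := by
  have hb : b ∈ Set.Ici (0 : ℝ) := Set.mem_Ici.2 (ha.trans hab.le)
  have e₁ := mul_le_mul_of_nonneg_left (hθ.chord_le ha hb hc₁.1 hc₁.2) hv₁
  have e₂ := mul_le_mul_of_nonneg_left (hθ.chord_le ha hb hc₂.1 hc₂.2) hv₂
  have := two_point_chord_eq (θa := θ a) (θb := θ b) hmass hmom
  refine le_of_mul_le_mul_left ?_ (sub_pos.2 hab)
  linarith

lemma StrictConvexOn.two_point_lt {θ : ℝ → ℝ} (hθ : StrictConvexOn ℝ (Set.Ici 0) θ)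
    {a b y₁ y₂ v₁ v₂ c₁ c₂ : ℝ} (ha : 0 ≤ a) (hab : a < b) (hv₁ : 0 ≤ v₁) (hv₂ : 0 < v₂)
    (hc₁ : c₁ ∈ Set.Icc a b) (hc₂ : c₂ ∈ Set.Ioo a b) (hmass : v₁ + v₂ = y₁ + y₂)
    (hmom : v₁ * c₁ + v₂ * c₂ = y₁ * a + y₂ * b) :
    v₁ * θ c₁ + v₂ * θ c₂ < y₁ * θ a + y₂ * θ b := by
  have hb : b ∈ Set.Ici (0 : ℝ) := Set.mem_Ici.2 (ha.trans hab.le)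
  have e₁ := mul_le_mul_of_nonneg_left (hθ.convexOn.chord_le ha hb hc₁.1 hc₁.2) hv₁
  have e₂ := mul_lt_mul_of_pos_left (hθ.secant_strict_mono_aux1 ha hb hc₂.1 hc₂.2) hv₂
  have := two_point_chord_eq (θa := θ a) (θb := θ b) hmass hmom
  refine lt_of_mul_lt_mul_left ?_ (sub_pos.2 hab).le
  linarith

lemma Dtheta_shift_sub (θ : ℝ → ℝ) (x y : V → ℝ) {w₁ w₂ : V} (hne : w₁ ≠ w₂) (s r : ℝ) :
    Dtheta θ (x + s • (Pi.single w₁ 1 - Pi.single w₂ 1)) (y - r • (Pi.single w₁ 1 - Pi.single w₂ 1))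
        - Dtheta θ x y
      = ((y w₁ - r) * θ ((x w₁ + s) / (y w₁ - r)) + (y w₂ + r) * θ ((x w₂ - s) / (y w₂ + r)))
        - (y w₁ * θ (x w₁ / y w₁) + y w₂ * θ (x w₂ / y w₂)) := by
  rw [Dtheta, Dtheta, ← sum_sub_distrib, Fintype.sum_eq_add w₁ w₂ hne]
  · simp only [Pi.add_apply, Pi.sub_apply, Pi.smul_apply, smul_eq_mul, Pi.single_eq_same,
      Pi.single_eq_of_ne hne, Pi.single_eq_of_ne hne.symm, sub_zero, zero_sub, mul_one, mul_neg,
      sub_neg_eq_add, ← sub_eq_add_neg]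
    ring
  · rintro u ⟨h₁, h₂⟩
    simp [h₁, h₂]

lemma shifted_ratios_mem {x₁ y₁ x₂ y₂ s r : ℝ} (hx₁ : 0 ≤ x₁) (hy₁ : 0 < y₁) (hy₂ : 0 < y₂)
    (hab : x₁ / y₁ < x₂ / y₂) (hs : 0 ≤ s) (hr : 0 ≤ r)
    (h₁ : s + x₂ / y₂ * r < y₁ * (x₂ / y₂ - x₁ / y₁))
    (h₂ : s + x₁ / y₁ * r < y₂ * (x₂ / y₂ - x₁ / y₁)) :
    0 < y₁ - r ∧ (x₁ + s) / (y₁ - r) ∈ Set.Icc (x₁ / y₁) (x₂ / y₂) ∧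
      (x₂ - s) / (y₂ + r) ∈ Set.Ioc (x₁ / y₁) (x₂ / y₂) := by
  set a := x₁ / y₁
  set b := x₂ / y₂
  have hx₁a : x₁ = a * y₁ := (div_mul_cancel₀ x₁ hy₁.ne').symm
  have hx₂b : x₂ = b * y₂ := (div_mul_cancel₀ x₂ hy₂.ne').symm
  have ha : 0 ≤ a := div_nonneg hx₁ hy₁.le
  have hv₁ : 0 < y₁ - r := by nlinarith
  have hv₂ : 0 < y₂ + r := by linarith
  refine ⟨hv₁, ⟨?_, ?_⟩, ?_, ?_⟩
  · rw [le_div_iff₀ hv₁]; nlinarith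
  · rw [div_le_iff₀ hv₁]; nlinarith
  · rw [lt_div_iff₀ hv₂]; nlinarith
  · rw [div_le_iff₀ hv₂]; nlinarith

lemma ConvexOn.Dtheta_shift_le {θ : ℝ → ℝ} (hθ : ConvexOn ℝ (Set.Ici 0) θ) {x y : V → ℝ}
    {w₁ w₂ : V} (hne : w₁ ≠ w₂) (hx₁ : 0 ≤ x w₁) (hy₁ : 0 < y w₁) (hy₂ : 0 < y w₂)
    (hab : x w₁ / y w₁ < x w₂ / y w₂) {s r : ℝ} (hs : 0 ≤ s) (hr : 0 ≤ r)
    (h₁ : s + x w₂ / y w₂ * r < y w₁ * (x w₂ / y w₂ - x w₁ / y w₁))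
    (h₂ : s + x w₁ / y w₁ * r < y w₂ * (x w₂ / y w₂ - x w₁ / y w₁)) :
    Dtheta θ (x + s • (Pi.single w₁ 1 - Pi.single w₂ 1)) (y - r • (Pi.single w₁ 1 - Pi.single w₂ 1))
      ≤ Dtheta θ x y := by
  obtain ⟨hv₁, hc₁, hc₂⟩ := shifted_ratios_mem hx₁ hy₁ hy₂ hab hs hr h₁ h₂
  have := hθ.two_point_le (div_nonneg hx₁ hy₁.le) hab hv₁.le (by linarith) hc₁
    (Set.Ioc_subset_Icc_self hc₂) (v₂ := y w₂ + r) (y₁ := y w₁) (y₂ := y w₂) (by ring)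
    (by field_simp; ring)
  linarith [Dtheta_shift_sub θ x y hne s r]

lemma StrictConvexOn.Dtheta_shift_lt {θ : ℝ → ℝ} (hθ : StrictConvexOn ℝ (Set.Ici 0) θ)
    {x y : V → ℝ} {w₁ w₂ : V} (hne : w₁ ≠ w₂) (hx₁ : 0 ≤ x w₁) (hy₁ : 0 < y w₁)
    (hy₂ : 0 < y w₂) (hab : x w₁ / y w₁ < x w₂ / y w₂) {s r : ℝ} (hs : 0 ≤ s) (hr : 0 ≤ r)
    (hsr : 0 < s + r) (h₁ : s + x w₂ / y w₂ * r < y w₁ * (x w₂ / y w₂ - x w₁ / y w₁))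
    (h₂ : s + x w₁ / y w₁ * r < y w₂ * (x w₂ / y w₂ - x w₁ / y w₁)) :
    Dtheta θ (x + s • (Pi.single w₁ 1 - Pi.single w₂ 1)) (y - r • (Pi.single w₁ 1 - Pi.single w₂ 1))
      < Dtheta θ x y := by
  obtain ⟨hv₁, hc₁, hc₂⟩ := shifted_ratios_mem hx₁ hy₁ hy₂ hab hs hr h₁ h₂
  have hb : 0 < x w₂ / y w₂ := (div_nonneg hx₁ hy₁.le).trans_lt hab
  have hv₂ : 0 < y w₂ + r := by linarith
  have hc₂b : (x w₂ - s) / (y w₂ + r) < x w₂ / y w₂ := by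
    rw [div_lt_iff₀ hv₂]
    have : x w₂ = x w₂ / y w₂ * y w₂ := by field_simp
    rcases hs.lt_or_eq with hs | rfl <;> nlinarith
  have := hθ.two_point_lt (div_nonneg hx₁ hy₁.le) hab hv₁.le hv₂ hc₁ ⟨hc₂.1, hc₂b⟩
    (v₁ := y w₁ - r) (y₁ := y w₁) (y₂ := y w₂) (by ring) (by field_simp; ring)
  linarith [Dtheta_shift_sub θ x y hne s r]

/-- `diag := False` gives the joint problem, `diag := True` the one restricted to `p = q`. -/
def IsFeasible (diag : Prop) (p q : Perms V → ℝ) : Prop := IsDist p ∧ IsDist q ∧ (diag → p = q)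

def IsLexMin (θA θB : ℝ → ℝ) (f g : Finset V → ℝ) (diag : Prop) (p q : Perms V → ℝ) : Prop :=
  ∀ p' q', IsFeasible diag p' q' → Phi θA f g p' q' ≤ Phi θA f g p q →
    Phi θB f g p q ≤ Phi θB f g p' q'

section LexMin

variable {f g : Finset V → ℝ} {θA θB : ℝ → ℝ} {diag : Prop} {p q : Perms V → ℝ}

lemma IsLexMin.congr (hlex : IsLexMin θA θB f g diag p q) {p' q' : Perms V → ℝ}
    (hx : distVal f p' = distVal f p) (hy : distVal g q' = distVal g q) :
    IsLexMin θA θB f g diag p' q' := by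
  intro p'' q'' hfeas hle
  simp only [Phi, hx, hy] at hle ⊢
  exact hlex p'' q'' hfeas hle

lemma exists_pos_mul_lt_and_mul_lt (C₁ C₂ : ℝ) {E₁ E₂ : ℝ} (h₁ : 0 < E₁) (h₂ : 0 < E₂) :
    ∃ t > 0, t * C₁ < E₁ ∧ t * C₂ < E₂ := by
  have hlim : ∀ C : ℝ, Tendsto (fun t => t * C) (𝓝[>] 0) (𝓝 0) := fun C => by
    simpa using (tendsto_id.mul_const C).mono_left (nhdsWithin_le_nhds (a := (0 : ℝ)))
  obtain ⟨t, ⟨ht₁, ht₂⟩, ht⟩ := ((((hlim C₁).eventually_lt_const h₁).and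
    ((hlim C₂).eventually_lt_const h₂)).and self_mem_nhdsWithin).exists
  exact ⟨t, ht, ht₁, ht₂⟩

lemma exists_small_transfer {P Q Δf Δg a b y₁ y₂ : ℝ} (hP : 0 ≤ P) (hQ : 0 ≤ Q)
    (hΔf : 0 ≤ Δf) (hΔg : Δg ≤ 0) (ha : 0 ≤ a) (hab : a < b) (hy₁ : 0 < y₁) (hy₂ : 0 < y₂)
    (hne : P * Δf ≠ 0 ∨ Q * Δg ≠ 0) :
    ∃ t > 0, 0 < min t P * Δf + -(min t Q * Δg) ∧
      min t P * Δf + b * -(min t Q * Δg) < y₁ * (b - a) ∧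
      min t P * Δf + a * -(min t Q * Δg) < y₂ * (b - a) := by
  obtain ⟨t, ht, ht₁, ht₂⟩ := exists_pos_mul_lt_and_mul_lt (Δf - b * Δg) (Δf - a * Δg)
    (mul_pos hy₁ (sub_pos.2 hab)) (mul_pos hy₂ (sub_pos.2 hab))
  have hs : min t P * Δf ≤ t * Δf := mul_le_mul_of_nonneg_right (min_le_left _ _) hΔf
  have hr : -(min t Q * Δg) ≤ -(t * Δg) := by nlinarith [min_le_left t Q]
  refine ⟨t, ht, ?_, ?_, ?_⟩
  · rcases hne with h | h
    · have hP' : 0 < P := hP.lt_of_ne fun h' => h (by rw [← h', zero_mul])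
      have hΔf' : 0 < Δf := hΔf.lt_of_ne fun h' => h (by rw [← h', mul_zero])
      nlinarith [lt_min ht hP', le_min ht.le hQ]
    · have hQ' : 0 < Q := hQ.lt_of_ne fun h' => h (by rw [← h', zero_mul])
      have hΔg' : Δg < 0 := hΔg.lt_of_ne fun h' => h (by rw [h', mul_zero])
      nlinarith [lt_min ht hQ', le_min ht.le hP]
  · nlinarith [mul_le_mul_of_nonneg_left hr (ha.trans hab.le)]
  · nlinarith [mul_le_mul_of_nonneg_left hr ha]

/-- At a lexicographic minimizer, an adjacent pair in the wrong order (lower density first) in a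
permutation of the support can be exchanged without changing any marginal. Otherwise a small
transfer of mass to the exchanged permutation would move both densities strictly towards each
other, which does not increase `Φ_{θA}` and strictly decreases `Φ_{θB}`. -/
lemma IsLexMin.mul_swapGain_eq_zero (hdm : DualModular f g)
    (hθA : ConvexOn ℝ (Set.Ici 0) θA) (hθB : StrictConvexOn ℝ (Set.Ici 0) θB)
    (hlex : IsLexMin θA θB f g diag p q) (hfeas : IsFeasible diag p q) {σ : Perms V} {w₁ w₂ : V}
    (hadj : Adjacent σ w₁ w₂) (hρ : solDensity f g p q w₁ < solDensity f g p q w₂) :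
    p σ * swapGain f σ w₁ w₂ = 0 ∧ q σ * swapGain g σ w₁ w₂ = 0 := by
  obtain ⟨hp, hq, hdiag⟩ := hfeas
  set x := distVal f p
  set y := distVal g q
  set Δf := swapGain f σ w₁ w₂
  set Δg := swapGain g σ w₁ w₂
  have hΔf : 0 ≤ Δf := hadj.swapGain_nonneg hdm.f_supermodular
  have hΔg : Δg ≤ 0 := hadj.swapGain_nonpos hdm.g_submodular
  have hy₁ : 0 < y w₁ := distVal_pos hdm.g_strictMono hq w₁
  have hy₂ : 0 < y w₂ := distVal_pos hdm.g_strictMono hq w₂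
  have hx₁ : 0 ≤ x w₁ := distVal_nonneg hdm.f_mono hp w₁
  have hab : x w₁ / y w₁ < x w₂ / y w₂ := hρ
  by_contra hne
  obtain ⟨t, ht, hsr, h₁, h₂⟩ := exists_small_transfer (hp.1 σ) (hq.1 σ) hΔf hΔg
    (div_nonneg hx₁ hy₁.le) hab hy₁ hy₂ (not_and_or.1 hne)
  set σ' := swapPerm σ w₁ w₂
  set tp := min t (p σ)
  set tq := min t (q σ)
  have htp : 0 ≤ tp := le_min ht.le (hp.1 σ)
  have htq : 0 ≤ tq := le_min ht.le (hq.1 σ)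
  have hs : 0 ≤ tp * Δf := mul_nonneg htp hΔf
  have hr : 0 ≤ -(tq * Δg) := neg_nonneg.2 (mul_nonpos_of_nonneg_of_nonpos htq hΔg)
  have hσ' : σ ≠ σ' := hadj.swapPerm_ne.symm
  have hfeas' : IsFeasible diag (transfer p σ σ' tp) (transfer q σ σ' tq) :=
    ⟨hp.transfer hσ' htp (min_le_right _ _), hq.transfer hσ' htq (min_le_right _ _),
      fun hd => by simp only [tp, tq, hdiag hd]⟩
  have hPhi : ∀ θ, Phi θ f g (transfer p σ σ' tp) (transfer q σ σ' tq)
      = Dtheta θ (x + (tp * Δf) • (Pi.single w₁ 1 - Pi.single w₂ 1))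
          (y - (-(tq * Δg)) • (Pi.single w₁ 1 - Pi.single w₂ 1)) := fun θ => by
    rw [Phi, hadj.distVal_transfer_swapPerm, hadj.distVal_transfer_swapPerm, neg_smul,
      sub_neg_eq_add]
  have hA := hθA.Dtheta_shift_le hadj.ne hx₁ hy₁ hy₂ hab hs hr h₁ h₂
  have hB := hθB.Dtheta_shift_lt hadj.ne hx₁ hy₁ hy₂ hab hs hr hsr h₁ h₂
  rw [← hPhi] at hA hB
  exact (hlex _ _ hfeas' hA).not_gt hB

/-- Exchanging an adjacent pair in the wrong order, and transferring the whole mass of the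
permutation to the exchanged one, removes one inversion without changing the allocation. -/
lemma IsLexMin.exists_inversionCount_lt (hdm : DualModular f g)
    (hθA : ConvexOn ℝ (Set.Ici 0) θA) (hθB : StrictConvexOn ℝ (Set.Ici 0) θB)
    (hlex : IsLexMin θA θB f g diag p q) (hfeas : IsFeasible diag p q) {σ : Perms V}
    (hσ : σ ∈ solSupport p q) (hinv : (inversions (solDensity f g p q) σ).Nonempty) :
    ∃ p' q', IsFeasible diag p' q' ∧ distVal f p' = distVal f p ∧ distVal g q' = distVal g q ∧
      inversionCount (solDensity f g p q) p' q' < inversionCount (solDensity f g p q) p q := by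
  obtain ⟨w₁, w₂, hadj, hρ⟩ := exists_adjacent_of_inversions_nonempty hinv
  obtain ⟨hf₀, hg₀⟩ := hlex.mul_swapGain_eq_zero hdm hθA hθB hfeas hadj hρ
  have hne : σ ≠ swapPerm σ w₁ w₂ := hadj.swapPerm_ne.symm
  have hw : (w₁, w₂) ∈ inversions (solDensity f g p q) σ := mem_filter.2 ⟨mem_univ _, hadj.lt, hρ⟩
  refine ⟨transfer p σ (swapPerm σ w₁ w₂) (p σ), transfer q σ (swapPerm σ w₁ w₂) (q σ),
    ⟨hfeas.1.transfer hne (hfeas.1.1 σ) le_rfl, hfeas.2.1.transfer hne (hfeas.2.1.1 σ) le_rfl,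
      fun hd => by rw [hfeas.2.2 hd]⟩, ?_, ?_, ?_⟩
  · rw [hadj.distVal_transfer_swapPerm, hf₀, zero_smul, add_zero]
  · rw [hadj.distVal_transfer_swapPerm, hg₀, zero_smul, add_zero]
  · refine sum_lt_sum_of_subset_erase_union_singleton hσ (solSupport_transfer_subset hne) ?_
    rw [hadj.inversions_swapPerm hρ]
    exact card_erase_lt_of_mem hw

/-- Induction on the number of inversions in the support; each exchange preserves the allocation,
hence lexicographic minimality. -/
theorem IsLexMin.exists_locallyMaximinSol (hdm : DualModular f g)
    (hθA : ConvexOn ℝ (Set.Ici 0) θA) (hθB : StrictConvexOn ℝ (Set.Ici 0) θB)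
    (hlex : IsLexMin θA θB f g diag p q) (hfeas : IsFeasible diag p q) :
    ∃ p' q', IsFeasible diag p' q' ∧ LocallyMaximinSol f g p' q' ∧
      distVal f p' = distVal f p ∧ distVal g q' = distVal g q := by
  set ρ := solDensity f g p q
  suffices ∀ n p' q', IsFeasible diag p' q' → distVal f p' = distVal f p →
      distVal g q' = distVal g q → inversionCount ρ p' q' = n →
      ∃ p'' q'', IsFeasible diag p'' q'' ∧ LocallyMaximinSol f g p'' q'' ∧
        distVal f p'' = distVal f p ∧ distVal g q'' = distVal g q from
    this _ p q hfeas rfl rfl rfl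
  intro n
  induction n using Nat.strong_induction_on with
  | _ n ih =>
  intro p' q' hfeas' hx hy hn
  have hρ : solDensity f g p' q' = ρ := by unfold ρ solDensity; rw [hx, hy]
  by_cases hsorted : ∀ σ ∈ solSupport p' q', inversions ρ σ = ∅
  · exact ⟨p', q', hfeas', locallyMaximinSol_of_inversions_eq_empty (hρ ▸ hsorted), hx, hy⟩
  push Not at hsorted
  obtain ⟨σ, hσ, hinv⟩ := hsorted
  obtain ⟨p'', q'', hfeas'', hx', hy', hlt⟩ := (hlex.congr hx hy).exists_inversionCount_lt hdm
    hθA hθB hfeas' hσ (hρ ▸ hinv)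
  rw [hρ] at hlt
  exact ih _ (hn ▸ hlt) p'' q'' hfeas'' (hx'.trans hx) (hy'.trans hy) rfl

end LexMin

lemma Dtheta_eq_add {θ θ' : ℝ → ℝ} (hEq : Set.EqOn θ' θ (Set.Ioi 0)) {x y : V → ℝ}
    (hx : ∀ u, 0 ≤ x u) (hy : ∀ u, 0 < y u) :
    Dtheta θ x y = Dtheta θ' x y + (θ 0 - θ' 0) * ∑ u ∈ univ.filter (fun u => x u = 0), y u := by
  rw [Dtheta, Dtheta, mul_sum, sum_filter, ← sum_add_distrib]
  refine sum_congr rfl fun u _ => ?_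
  by_cases hu : x u = 0
  · simp only [hu, zero_div, if_true]; ring
  · simp only [hu, if_false, add_zero]
    rw [hEq (div_pos ((hx u).lt_of_ne (Ne.symm hu)) (hy u))]

section LocallyMaximin

variable {f g : Finset V → ℝ} {p q : Perms V → ℝ}

lemma LocallyMaximinSol.isInitial_pos (hdm : DualModular f g) (hp : IsDist p) (hq : IsDist q)
    (hmm : LocallyMaximinSol f g p q) {σ : Perms V} (hσ : 0 < p σ ∨ 0 < q σ) :
    IsInitial σ (univ.filter fun u => 0 < distVal f p u) := by
  intro w hw v hv
  simp only [mem_filter, mem_univ, true_and, not_lt] at hw hv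
  refine hmm w v ?_ σ hσ
  rw [solDensity, solDensity, le_antisymm hv (distVal_nonneg hdm.f_mono hp v), zero_div]
  exact div_pos hw (distVal_pos hdm.g_strictMono hq w)

/-- An element of density zero at a locally maximin solution has zero marginal everywhere: the
positive-density elements form an initial segment of full value `f V`, so by supermodularity
nothing is left for the others. -/
lemma LocallyMaximinSol.permVal_eq_zero (hdm : DualModular f g) (hp : IsDist p)
    (hq : IsDist q) (hmm : LocallyMaximinSol f g p q) {u : V} (hu : distVal f p u = 0)
    (τ : Perms V) : permVal f τ u = 0 := by
  set P := univ.filter fun u => 0 < distVal f p u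
  have hsum : ∑ v ∈ P, distVal f p v = ∑ v, distVal f p v :=
    sum_filter_of_ne fun v _ hv => (distVal_nonneg hdm.f_mono hp v).lt_of_ne (Ne.symm hv)
  have hfP : f P = f univ := by
    rw [← sum_distVal_of_isInitial hdm.f_empty hp fun σ hσ => hmm.isInitial_pos hdm hp hq
      (Or.inl hσ), hsum, sum_distVal_of_isInitial hdm.f_empty hp fun σ _ => isInitial_univ σ]
  have hPu : P ⊆ univ.erase u := fun v hv =>
    mem_erase.2 ⟨fun h => by simp [P, h, hu] at hv, mem_univ v⟩
  have := hdm.f_mono _ _ hPu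
  have := hdm.f_supermodular.permVal_le τ u
  linarith [permVal_nonneg hdm.f_mono τ u]

/-- At a locally maximin solution the `y`-mass of density zero is the least possible,
`g V - g P` with `P` the elements of positive density. -/
lemma LocallyMaximinSol.Phi_le (hdm : DualModular f g) (hp : IsDist p) (hq : IsDist q)
    (hmm : LocallyMaximinSol f g p q) {θ θ' : ℝ → ℝ} (hEq : Set.EqOn θ' θ (Set.Ioi 0))
    (h₀ : θ' 0 ≤ θ 0) {p' q' : Perms V → ℝ} (hp' : IsDist p') (hq' : IsDist q')
    (hle : Phi θ' f g p q ≤ Phi θ' f g p' q') : Phi θ f g p q ≤ Phi θ f g p' q' := by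
  set P := univ.filter fun u => 0 < distVal f p u
  set N := univ.filter fun u => ¬0 < distVal f p u
  have hsplit : ∀ {q}, IsDist q → ∑ u ∈ N, distVal g q u = g univ - ∑ u ∈ P, distVal g q u :=
    fun hq => by
      rw [eq_sub_iff_add_eq', sum_filter_add_sum_filter_not,
        sum_distVal_of_isInitial hdm.g_empty hq fun σ _ => isInitial_univ σ]
  have hN : N = univ.filter fun u => distVal f p u = 0 := filter_congr fun u _ =>
    ⟨fun h => le_antisymm (not_lt.1 h) (distVal_nonneg hdm.f_mono hp u), fun h => h.not_gt⟩
  have hN' : N ⊆ univ.filter fun u => distVal f p' u = 0 := fun u hu => by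
    rw [hN, mem_filter] at hu
    refine mem_filter.2 ⟨mem_univ u, ?_⟩
    simp only [distVal, hmm.permVal_eq_zero hdm hp hq hu.2, mul_zero, sum_const_zero]
  have hmass : g univ - g P = ∑ u ∈ N, distVal g q u := by
    rw [hsplit hq, sum_distVal_of_isInitial hdm.g_empty hq fun σ hσ =>
      hmm.isInitial_pos hdm hp hq (Or.inr hσ)]
  have hmass' : g univ - g P ≤ ∑ u ∈ univ.filter (fun u => distVal f p' u = 0), distVal g q' u :=
    calc g univ - g P ≤ ∑ u ∈ N, distVal g q' u := by
          rw [hsplit hq']; linarith [hdm.g_submodular.sum_distVal_le hdm.g_empty hq' P]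
      _ ≤ _ := sum_le_sum_of_subset_of_nonneg hN' fun u _ _ =>
          (distVal_pos hdm.g_strictMono hq' u).le
  have hdecomp : ∀ {p q}, IsDist p → IsDist q → Phi θ f g p q = Phi θ' f g p q +
      (θ 0 - θ' 0) * ∑ u ∈ univ.filter (fun u => distVal f p u = 0), distVal g q u :=
    fun hp hq => Dtheta_eq_add hEq (distVal_nonneg hdm.f_mono hp) (distVal_pos hdm.g_strictMono hq)
  rw [hdecomp hp hq, hdecomp hp' hq', ← hN, ← hmass]
  linarith [mul_le_mul_of_nonneg_left hmass' (sub_nonneg.2 h₀)]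

end LocallyMaximin

lemma ConvexOn.exists_tendsto_nhdsGT_zero {θ : ℝ → ℝ} (hθ : ConvexOn ℝ (Set.Ici 0) θ) :
    ∃ L, Tendsto θ (𝓝[>] 0) (𝓝 L) := by
  -- slope of the chord from `1`, taken at `min t (1/2)` to stay away from `1`: monotone by
  -- convexity and bounded below by its value at `0`
  set s : ℝ → ℝ := fun t => (θ (min t (1 / 2)) - θ 1) / (min t (1 / 2) - 1)
  have hmem : ∀ t : ℝ, 0 ≤ t → min t (1 / 2) ∈ Set.Ici (0 : ℝ) ∧ min t (1 / 2) ≠ 1 :=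
    fun t ht => ⟨le_min ht (by norm_num), ((min_le_right _ _).trans_lt (by norm_num)).ne⟩
  have h₁ : (1 : ℝ) ∈ Set.Ici 0 := Set.mem_Ici.2 zero_le_one
  have hmono : MonotoneOn s (Set.Ioi 0) := fun x hx y hy hxy =>
    hθ.secant_mono h₁ (hmem x (le_of_lt hx)).1 (hmem y (le_of_lt hy)).1 (hmem x (le_of_lt hx)).2
      (hmem y (le_of_lt hy)).2 (min_le_min_right _ hxy)
  have hbdd : BddBelow (s '' Set.Ioi 0) := ⟨s 0, by
    rintro _ ⟨t, ht, rfl⟩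
    exact hθ.secant_mono h₁ (hmem 0 le_rfl).1 (hmem t (le_of_lt ht)).1 (hmem 0 le_rfl).2
      (hmem t (le_of_lt ht)).2 (min_le_min_right _ (le_of_lt ht))⟩
  refine ⟨θ 1 + (0 - 1) * sInf (s '' Set.Ioi 0), ?_⟩
  have hid : Tendsto (fun t : ℝ => t - 1) (𝓝[>] 0) (𝓝 (0 - 1)) :=
    (tendsto_id.mono_left nhdsWithin_le_nhds).sub_const 1
  refine (tendsto_const_nhds.add (hid.mul (hmono.tendsto_nhdsGT hbdd))).congr' ?_
  filter_upwards [Ioo_mem_nhdsGT (show (0 : ℝ) < 1 / 2 by norm_num)] with t ht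
  have ht1 : t - 1 ≠ 0 := by linarith [ht.2]
  simp only [s, min_eq_left ht.2.le]
  field_simp
  ring

lemma ConvexOn.Ici_of_continuousOn {φ : ℝ → ℝ} (hφ : ConvexOn ℝ (Set.Ioi 0) φ)
    (hc : ContinuousOn φ (Set.Ici 0)) : ConvexOn ℝ (Set.Ici 0) φ := by
  refine ⟨convex_Ici 0, fun x hx y hy a b ha hb hab => ?_⟩
  have hlim : ∀ z ∈ Set.Ici (0 : ℝ), Tendsto (fun ε => φ (z + ε)) (𝓝[>] 0) (𝓝 (φ z)) :=
    fun z hz => (hc z hz).tendsto.comp <| tendsto_nhdsWithin_iff.2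
      ⟨by simpa using (tendsto_const_nhds (x := z)).add (tendsto_id.mono_left
        (nhdsWithin_le_nhds (a := (0 : ℝ)))),
       eventually_nhdsWithin_of_forall fun ε hε =>
        Set.mem_Ici.2 (add_nonneg (Set.mem_Ici.1 hz) (le_of_lt hε))⟩
  refine le_of_tendsto_of_tendsto (hlim _ (convex_Ici 0 hx hy ha hb hab))
    (((hlim x hx).const_mul a).add ((hlim y hy).const_mul b)) ?_
  filter_upwards [self_mem_nhdsWithin] with ε (hε : 0 < ε)
  have := hφ.2 (Set.mem_Ioi.2 (add_pos_of_nonneg_of_pos hx hε))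
    (Set.mem_Ioi.2 (add_pos_of_nonneg_of_pos hy hε)) ha hb hab
  simp only [smul_eq_mul] at this ⊢
  convert this using 2
  linear_combination ε * hab.symm

/-- A convex function on `[0, ∞)` may jump up at `0`; lowering its value there to the right
limit yields a continuous convex function. -/
lemma ConvexOn.exists_continuousOn_eqOn_Ioi {θ : ℝ → ℝ} (hθ : ConvexOn ℝ (Set.Ici 0) θ) :
    ∃ θ' : ℝ → ℝ, ConvexOn ℝ (Set.Ici 0) θ' ∧ ContinuousOn θ' (Set.Ici 0) ∧
      Set.EqOn θ' θ (Set.Ioi 0) ∧ θ' 0 ≤ θ 0 := by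
  obtain ⟨L, hL⟩ := hθ.exists_tendsto_nhdsGT_zero
  set θ' := Function.update θ 0 L
  have hEq : Set.EqOn θ' θ (Set.Ioi 0) := fun t ht => Function.update_of_ne (ne_of_gt ht) _ _
  have hθc : ContinuousOn θ (Set.Ioi 0) :=
    (hθ.subset Set.Ioi_subset_Ici_self (convex_Ioi 0)).continuousOn isOpen_Ioi
  have hL' : Tendsto θ' (𝓝[>] 0) (𝓝 (θ' 0)) := by
    rw [show θ' 0 = L from Function.update_self _ _ _]
    exact hL.congr' (eventuallyEq_nhdsWithin_of_eqOn hEq).symm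
  have hcont : ContinuousOn θ' (Set.Ici 0) := by
    intro t ht
    rcases (Set.mem_Ici.1 ht).eq_or_lt with rfl | ht
    · exact continuousWithinAt_Ioi_iff_Ici.1 hL'
    · refine (((hθc t ht).continuousAt (isOpen_Ioi.mem_nhds ht)).congr ?_).continuousWithinAt
      exact Filter.mem_of_superset (isOpen_Ioi.mem_nhds ht) fun u hu => (hEq hu).symm
  have hconv : ConvexOn ℝ (Set.Ioi 0) θ' :=
    (hθ.subset Set.Ioi_subset_Ici_self (convex_Ioi 0)).congr hEq.symm
  refine ⟨θ', hconv.Ici_of_continuousOn hcont, hcont, hEq, ?_⟩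
  have hlin : Tendsto (fun t : ℝ => (1 - t) * θ 0 + t * θ 1) (𝓝[>] 0) (𝓝 (θ 0)) := by
    have : Continuous fun t : ℝ => (1 - t) * θ 0 + t * θ 1 := by fun_prop
    simpa using (this.tendsto 0).mono_left nhdsWithin_le_nhds
  refine le_of_tendsto_of_tendsto hL' hlin ?_
  filter_upwards [Ioo_mem_nhdsGT (show (0 : ℝ) < 1 by norm_num)] with t ht
  have := hθ.2 (Set.mem_Ici.2 le_rfl) (Set.mem_Ici.2 zero_le_one) (sub_nonneg.2 ht.2.le)
    ht.1.le (sub_add_cancel 1 t)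
  simp only [smul_eq_mul, mul_zero, mul_one, zero_add] at this
  rw [hEq ht.1]
  simpa using this

lemma isCompact_feasible (diag : Prop) :
    IsCompact {z : (Perms V → ℝ) × (Perms V → ℝ) | IsFeasible diag z.1 z.2} := by
  have : {z : (Perms V → ℝ) × (Perms V → ℝ) | IsFeasible diag z.1 z.2}
      = (stdSimplex ℝ (Perms V) ×ˢ stdSimplex ℝ (Perms V)) ∩ {z | diag → z.1 = z.2} :=
    Set.ext fun _ => and_assoc.symm
  rw [this]
  exact ((isCompact_stdSimplex _ _).prod (isCompact_stdSimplex _ _)).inter_right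
    (isClosed_imp isOpen_const (isClosed_eq continuous_fst continuous_snd))

lemma continuousOn_Phi {f g : Finset V → ℝ} (hdm : DualModular f g) {θ : ℝ → ℝ}
    (hθ : ContinuousOn θ (Set.Ici 0)) :
    ContinuousOn (fun z : (Perms V → ℝ) × (Perms V → ℝ) => Phi θ f g z.1 z.2)
      {z | IsDist z.1 ∧ IsDist z.2} := by
  have hx : ∀ u, Continuous fun z : (Perms V → ℝ) × (Perms V → ℝ) => distVal f z.1 u :=
    fun u => by unfold distVal; fun_prop
  have hy : ∀ u, Continuous fun z : (Perms V → ℝ) × (Perms V → ℝ) => distVal g z.2 u :=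
    fun u => by unfold distVal; fun_prop
  refine continuousOn_finsetSum _ fun u _ => (hy u).continuousOn.mul (hθ.comp
    ((hx u).continuousOn.div (hy u).continuousOn fun z hz =>
      (distVal_pos hdm.g_strictMono hz.2 u).ne') fun z hz => ?_)
  exact div_nonneg (distVal_nonneg hdm.f_mono hz.1 u) (distVal_pos hdm.g_strictMono hz.2 u).le

lemma IsCompact.exists_isMinOn_lex {X : Type*} [TopologicalSpace X] [T2Space X] {K : Set X}
    (hK : IsCompact K) (hne : K.Nonempty) {F G : X → ℝ} (hF : ContinuousOn F K)
    (hG : ContinuousOn G K) :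
    ∃ z ∈ K, IsMinOn F K z ∧ ∀ z' ∈ K, F z' ≤ F z → G z ≤ G z' := by
  obtain ⟨z₀, hz₀, hmin⟩ := hK.exists_isMinOn hne hF
  have hM : IsCompact (K ∩ F ⁻¹' Set.Iic (F z₀)) := hK.of_isClosed_subset
    (hF.preimage_isClosed_of_isClosed hK.isClosed isClosed_Iic) Set.inter_subset_left
  obtain ⟨z, ⟨hzK, hzF⟩, hzmin⟩ :=
    hM.exists_isMinOn ⟨z₀, hz₀, Set.mem_preimage.2 Set.self_mem_Iic⟩ (hG.mono Set.inter_subset_left)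
  have hFz : F z = F z₀ := le_antisymm hzF (isMinOn_iff.1 hmin z hzK)
  refine ⟨z, hzK, isMinOn_iff.2 fun z' hz' => hFz ▸ isMinOn_iff.1 hmin z' hz',
    fun z' hz' hle => isMinOn_iff.1 hzmin z' ⟨hz', hFz ▸ hle⟩⟩

section Minimizers

variable {f g : Finset V → ℝ} {θ : ℝ → ℝ} {diag : Prop}

theorem exists_locallyMaximin_minimizer (hdm : DualModular f g)
    (hθ : ConvexOn ℝ (Set.Ici 0) θ) (hne : ∃ p q : Perms V → ℝ, IsFeasible diag p q) :
    ∃ p q, IsFeasible diag p q ∧ LocallyMaximinSol f g p q ∧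
      ∀ p' q', IsFeasible diag p' q' → Phi θ f g p q ≤ Phi θ f g p' q' := by
  obtain ⟨θ', hconv, hcont, hEq, h₀⟩ := hθ.exists_continuousOn_eqOn_Ioi
  have hsub : {z : (Perms V → ℝ) × (Perms V → ℝ) | IsFeasible diag z.1 z.2}
      ⊆ {z | IsDist z.1 ∧ IsDist z.2} := fun z hz => ⟨hz.1, hz.2.1⟩
  obtain ⟨p₀, q₀, hfeas₀⟩ := hne
  obtain ⟨z, hz, hmin, hlex⟩ := (isCompact_feasible diag).exists_isMinOn_lex ⟨(p₀, q₀), hfeas₀⟩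
    ((continuousOn_Phi hdm hcont).mono hsub)
    ((continuousOn_Phi hdm (continuous_pow 2).continuousOn).mono hsub)
  obtain ⟨p, q, hfeas, hmm, hx, hy⟩ := IsLexMin.exists_locallyMaximinSol hdm hconv
    (strictConvexOn_pow le_rfl) (fun p' q' hfeas' hle => hlex (p', q') hfeas' hle) hz
  refine ⟨p, q, hfeas, hmm, fun p' q' hfeas' =>
    hmm.Phi_le hdm hfeas.1 hfeas.2.1 hEq h₀ hfeas'.1 hfeas'.2.1 ?_⟩
  simpa only [Phi, hx, hy] using isMinOn_iff.1 hmin (p', q') hfeas'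

theorem exists_locallyMaximin_minimizer_of_minimizer (hdm : DualModular f g)
    (hθ : ConvexOn ℝ (Set.Ici 0) θ) {p q : Perms V → ℝ} (hfeas : IsFeasible diag p q)
    (hmin : ∀ p' q', IsFeasible diag p' q' → Phi θ f g p q ≤ Phi θ f g p' q') :
    ∃ ph qh, IsFeasible diag ph qh ∧ LocallyMaximinSol f g ph qh ∧
      (∀ p' q', IsFeasible diag p' q' → Phi θ f g ph qh ≤ Phi θ f g p' q') ∧
      (StrictConvexOn ℝ (Set.Ici 0) θ →
        distVal f ph = distVal f p ∧ distVal g qh = distVal g q) := by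
  by_cases hs : StrictConvexOn ℝ (Set.Ici 0) θ
  · obtain ⟨ph, qh, hfeas', hmm, hx, hy⟩ :=
      IsLexMin.exists_locallyMaximinSol hdm hθ hs (fun p' q' hfeas' _ => hmin p' q' hfeas') hfeas
    refine ⟨ph, qh, hfeas', hmm, fun p' q' hfeas'' => ?_, fun _ => ⟨hx, hy⟩⟩
    simpa only [Phi, hx, hy] using hmin p' q' hfeas''
  · obtain ⟨ph, qh, hfeas', hmm, hmin'⟩ := exists_locallyMaximin_minimizer hdm hθ ⟨p, q, hfeas⟩
    exact ⟨ph, qh, hfeas', hmm, hmin', fun h => absurd h hs⟩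

end Minimizers

/-- Lemma 3.1: from any minimizer of `Φ_θ` one obtains a locally
maximin minimizer; with strict convexity the induced allocation (hence densities) is
preserved. The same holds for minimization restricted to the diagonal `p = q`. -/
theorem exists_locally_maximin_optimal_solution (f g : Finset V → ℝ)
    (hdm : DualModular f g) (θ : ℝ → ℝ) (hθ : ConvexOn ℝ (Set.Ici 0) θ)
    (p q : Perms V → ℝ) (hp : IsDist p) (hq : IsDist q)
    (hmin : ∀ p' q' : Perms V → ℝ, IsDist p' → IsDist q' →
      Phi θ f g p q ≤ Phi θ f g p' q') :
    (∃ ph qh : Perms V → ℝ, IsDist ph ∧ IsDist qh ∧ LocallyMaximinSol f g ph qh ∧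
      (∀ p' q' : Perms V → ℝ, IsDist p' → IsDist q' →
        Phi θ f g ph qh ≤ Phi θ f g p' q') ∧
      (StrictConvexOn ℝ (Set.Ici 0) θ →
        distVal f ph = distVal f p ∧ distVal g qh = distVal g q)) ∧
    (∀ r : Perms V → ℝ, IsDist r →
      (∀ r' : Perms V → ℝ, IsDist r' → Phi θ f g r r ≤ Phi θ f g r' r') →
      ∃ rh : Perms V → ℝ, IsDist rh ∧ LocallyMaximinSol f g rh rh ∧
        (∀ r' : Perms V → ℝ, IsDist r' → Phi θ f g rh rh ≤ Phi θ f g r' r') ∧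
        (StrictConvexOn ℝ (Set.Ici 0) θ →
          distVal f rh = distVal f r ∧ distVal g rh = distVal g r)) := by
  refine ⟨?_, fun r hr hrmin => ?_⟩
  · obtain ⟨ph, qh, ⟨hph, hqh, -⟩, hmm, hmin', hstrict⟩ :=
      exists_locallyMaximin_minimizer_of_minimizer (diag := False) hdm hθ ⟨hp, hq, False.elim⟩
        fun p' q' h => hmin p' q' h.1 h.2.1
    exact ⟨ph, qh, hph, hqh, hmm, fun p' q' hp' hq' => hmin' p' q' ⟨hp', hq', False.elim⟩,
      hstrict⟩
  · obtain ⟨rh, _, ⟨hrh, -, hdiag⟩, hmm, hmin', hstrict⟩ :=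
      exists_locallyMaximin_minimizer_of_minimizer (diag := True) hdm hθ ⟨hr, hr, fun _ => rfl⟩
        fun p' q' ⟨hp', _, hdiag⟩ => by obtain rfl := hdiag trivial; exact hrmin p' hp'
    obtain rfl := hdiag trivial
    exact ⟨rh, hrh, hmm, fun r' hr' => hmin' r' r' ⟨hr', hr', fun _ => rfl⟩, hstrict⟩
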